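/- arXiv:1609.01695 — 6 statements merged into one kernel-verified Lean document; each statement's English description precedes it below -/
import Mathlib

section
/- Let A be a ring, J a two-sided ideal of A, and τ : J → ℂ an additive, ℂ-homogeneous map satisfying τ(a*b) = τ(b*a) whenever a ∈ J and b ∈ A. If a ∈ A and a₀, a₀' are both elements of A whose images under π : A → A/J are Drazin inverses of π(a), then τ(a*a₀ - a₀*a) = τ(a*a₀' - a₀'*a). That is, the index i(a) := τ([a,a₀]) is well defined independently of the chosen Drazin inverse modulo J. -/
/-! The Drazin inverse is unique, so `π a₀ = π a₀'` and `d := a₀ - a₀'` lies in `J`. Then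
`[a, a₀] - [a, a₀'] = [a, d] = a d - d a`, on which `τ` vanishes by the trace property. -/

/-- `c` is a Drazin inverse of `b` in a ring. -/
def IsDrazinInverse {R : Type*} [Ring R] (b c : R) : Prop :=
  b * c = c * b ∧ c * b * c = c ∧ ∃ k : ℕ, b ^ (k + 1) * c = b ^ k

namespace IsDrazinInverse

variable {R : Type*} [Ring R] {b c : R}

theorem commute (h : IsDrazinInverse b c) : Commute b c := h.1

theorem exists_pow_succ_mul_eq_pow (h : IsDrazinInverse b c) :
    ∃ k, ∀ n, k ≤ n → b ^ (n + 1) * c = b ^ n := by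
  obtain ⟨-, -, k, hk⟩ := h
  refine ⟨k, fun n hn => ?_⟩
  obtain ⟨j, rfl⟩ := Nat.exists_eq_add_of_le' hn
  rw [add_assoc, pow_add, mul_assoc, hk, ← pow_add]

theorem mul_pow_succ_eq_pow (h : IsDrazinInverse b c) {n : ℕ}
    (hn : b ^ (n + 1) * c = b ^ n) : c * b ^ (n + 1) = b ^ n := by
  rw [← (h.commute.pow_left (n + 1)).eq, hn]

theorem mul_mul_pow_eq_self (h : IsDrazinInverse b c) (m : ℕ) : c * (c * b) ^ m = c := by
  induction m with
  | zero => rw [pow_zero, mul_one]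
  | succ m ih => rw [pow_succ, ← mul_assoc, ih, ← mul_assoc, mul_assoc c c b, ← h.commute.eq,
      ← mul_assoc, h.2.1]

theorem pow_succ_mul_pow (h : IsDrazinInverse b c) (m : ℕ) : c ^ (m + 1) * b ^ m = c := by
  rw [pow_succ', mul_assoc, ← h.commute.symm.mul_pow, h.mul_mul_pow_eq_self]

theorem pow_mul_pow_succ (h : IsDrazinInverse b c) (m : ℕ) : b ^ m * c ^ (m + 1) = c := by
  rw [(h.commute.pow_pow m (m + 1)).eq, h.pow_succ_mul_pow]

/-- Both `c` and `c'` equal `c * b * c'`, using `c = c ^ (n + 1) * b ^ n` and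
`c' = b ^ n * c' ^ (n + 1)` for `n` beyond both indices. -/
theorem unique {c' : R} (h : IsDrazinInverse b c) (h' : IsDrazinInverse b c') : c = c' := by
  obtain ⟨k, hk⟩ := h.exists_pow_succ_mul_eq_pow
  obtain ⟨k', hk'⟩ := h'.exists_pow_succ_mul_eq_pow
  set n := max k k'
  have hn : b ^ (n + 1) * c = b ^ n := hk n (le_max_left _ _)
  have hn' : b ^ (n + 1) * c' = b ^ n := hk' n (le_max_right _ _)
  calc c = c ^ (n + 1) * b ^ n := (h.pow_succ_mul_pow n).symm
    _ = c ^ (n + 1) * b ^ n * (b * c') := by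
      rw [mul_assoc (c ^ (n + 1)), ← mul_assoc (b ^ n), ← pow_succ, hn']
    _ = c * b * c' := by rw [h.pow_succ_mul_pow, mul_assoc]
    _ = c * b * (b ^ n * c' ^ (n + 1)) := by rw [h'.pow_mul_pow_succ]
    _ = c * b ^ (n + 1) * c' ^ (n + 1) := by rw [pow_succ' b n]; simp only [mul_assoc]
    _ = c' := by rw [h.mul_pow_succ_eq_pow hn, h'.pow_mul_pow_succ]

end IsDrazinInverse

namespace TwoSidedIdeal

variable {R : Type*} [Ring R] (J : TwoSidedIdeal R)

theorem sub_mem_of_mk'_eq {x y : R} (h : RingCon.mk' J.ringCon x = RingCon.mk' J.ringCon y) :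
    x - y ∈ J :=
  (J.rel_iff x y).mp (J.ringCon.eq.mp h)

theorem commutator_mem_of_mk'_commute {x y : R}
    (h : Commute (RingCon.mk' J.ringCon x) (RingCon.mk' J.ringCon y)) : x * y - y * x ∈ J :=
  J.sub_mem_of_mk'_eq (by rw [map_mul, map_mul, h.eq])

end TwoSidedIdeal

section TraceOnIdeal

variable {R : Type*} [Ring R] {J : TwoSidedIdeal R} {τ : R → ℂ}

theorem map_sub_of_map_add_on (hadd : ∀ x ∈ J, ∀ y ∈ J, τ (x + y) = τ x + τ y)
    {x y : R} (hx : x ∈ J) (hy : y ∈ J) : τ (x - y) = τ x - τ y :=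
  eq_sub_of_add_eq (by rw [← hadd _ (J.sub_mem hx hy) _ hy, sub_add_cancel])

theorem map_commutator_eq_zero (hadd : ∀ x ∈ J, ∀ y ∈ J, τ (x + y) = τ x + τ y)
    (hcomm : ∀ x ∈ J, ∀ b : R, τ (x * b) = τ (b * x)) (a : R) {d : R} (hd : d ∈ J) :
    τ (a * d - d * a) = 0 := by
  rw [map_sub_of_map_add_on hadd (J.mul_mem_left a d hd) (J.mul_mem_right d a hd), hcomm d hd a,
    sub_self]

end TraceOnIdeal

theorem index_well_defined_general
    {A : Type*} [Ring A] (J : TwoSidedIdeal A)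
    (π : A →+* J.ringCon.Quotient) (hπ : π = RingCon.mk' J.ringCon)
    (τ : A → ℂ)
    (hadd : ∀ x ∈ J, ∀ y ∈ J, τ (x + y) = τ x + τ y)
    (hcomm : ∀ x ∈ J, ∀ b : A, τ (x * b) = τ (b * x))
    (a a₀ a₀' : A)
    (h : IsDrazinInverse (π a) (π a₀)) (h' : IsDrazinInverse (π a) (π a₀')) :
    τ (a * a₀ - a₀ * a) = τ (a * a₀' - a₀' * a) := by
  subst hπ
  have hd : a₀ - a₀' ∈ J := J.sub_mem_of_mk'_eq (h.unique h')
  have hdiff : a * a₀ - a₀ * a - (a * a₀' - a₀' * a) = a * (a₀ - a₀') - (a₀ - a₀') * a := by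
    noncomm_ring
  rw [← sub_eq_zero, ← map_sub_of_map_add_on hadd (J.commutator_mem_of_mk'_commute h.commute)
    (J.commutator_mem_of_mk'_commute h'.commute), hdiff,
    map_commutator_eq_zero hadd hcomm a hd]

/-- The index `τ([a, a₀])` of a B-Fredholm element is independent of the chosen
Drazin inverse modulo the ideal `J`. -/
theorem index_well_defined
    {A : Type*} [Ring A] [Algebra ℂ A] (J : TwoSidedIdeal A)
    (π : A →+* J.ringCon.Quotient) (hπ : π = RingCon.mk' J.ringCon)
    (τ : A → ℂ)
    (hadd : ∀ x ∈ J, ∀ y ∈ J, τ (x + y) = τ x + τ y)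
    (hsmul : ∀ (α : ℂ), ∀ x ∈ J, τ (α • x) = α * τ x)
    (hcomm : ∀ x ∈ J, ∀ b : A, τ (x * b) = τ (b * x))
    (a a₀ a₀' : A)
    (h : IsDrazinInverse (π a) (π a₀)) (h' : IsDrazinInverse (π a) (π a₀')) :
    τ (a * a₀ - a₀ * a) = τ (a * a₀' - a₀' * a) :=
  index_well_defined_general J π hπ τ hadd hcomm a a₀ a₀' h h'
end

section
/- Let X be a Banach space and T a bounded linear operator on X that decomposes as X = M ⊕ N with T(M) ⊆ M, T(N) ⊆ N, T restricted to N nilpotent, and T restricted to M Fredholm. Let T₀ be an inverse of T|_M modulo finite-rank operators on M, and S = T₀ ⊕ 0. Then S is a Drazin inverse of T modulo the ideal of finite-rank operators on X, i.e., in the quotient of bounded operators by finite-rank operators, the class of S is a Drazin inverse of the class of T. -/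
/-!
On `M` the three defects `TS - ST`, `STS - S` and `T^(p+1) S - T^p` restrict to
`(T|_M T₀ - 1) - (T₀ T|_M - 1)`, `T₀ (T|_M T₀ - 1)` and `T|_M^p (T|_M T₀ - 1)`, all of finite rank,
while on `N` they vanish because `S` kills `N`, `T` preserves `N` and `T^p` kills `N`.
Since `X = M ⊕ N`, each defect therefore has finite rank on `X`.
-/

/-- A bounded operator has finite rank if its range is finite dimensional. -/
def IsFiniteRank {X : Type*} [NormedAddCommGroup X] [NormedSpace ℂ X]
    (T : X →L[ℂ] X) : Prop :=
  FiniteDimensional ℂ (LinearMap.range (T : X →ₗ[ℂ] X))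

def IsFiniteRank' {M : Type*} [NormedAddCommGroup M] [NormedSpace ℂ M]
    (T : M →L[ℂ] M) : Prop :=
  FiniteDimensional ℂ (LinearMap.range (T : M →ₗ[ℂ] M))

namespace ContinuousLinearMap

variable {R X : Type*} [Ring R] [TopologicalSpace X] [AddCommGroup X] [Module R X]
  {M : Submodule R X}

def IsRestriction (B : M →L[R] M) (A : X →L[R] X) : Prop :=
  ∀ x : M, (B x : X) = A x

namespace IsRestriction

theorem one : IsRestriction (1 : M →L[R] M) 1 := fun _ => rfl

theorem mul {B₁ B₂ : M →L[R] M} {A₁ A₂ : X →L[R] X} (h₁ : IsRestriction B₁ A₁)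
    (h₂ : IsRestriction B₂ A₂) : IsRestriction (B₁ * B₂) (A₁ * A₂) := fun x => by
  change (B₁ (B₂ x) : X) = A₁ (A₂ x)
  rw [h₁, h₂]

theorem pow {B : M →L[R] M} {A : X →L[R] X} (h : IsRestriction B A) :
    ∀ n : ℕ, IsRestriction (B ^ n) (A ^ n)
  | 0 => one
  | n + 1 => by simpa only [pow_succ] using (h.pow n).mul h

theorem sub [IsTopologicalAddGroup X] {B₁ B₂ : M →L[R] M} {A₁ A₂ : X →L[R] X}
    (h₁ : IsRestriction B₁ A₁) (h₂ : IsRestriction B₂ A₂) :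
    IsRestriction (B₁ - B₂) (A₁ - A₂) := fun x => by
  rw [sub_apply, Submodule.coe_sub, h₁, h₂, sub_apply]

end IsRestriction

end ContinuousLinearMap

open ContinuousLinearMap

section FiniteRank

variable {X : Type*} [NormedAddCommGroup X] [NormedSpace ℂ X]

theorem IsFiniteRank'.sub {f g : X →L[ℂ] X} (hf : IsFiniteRank' f) (hg : IsFiniteRank' g) :
    IsFiniteRank' (f - g) := by
  have : FiniteDimensional ℂ (LinearMap.range (f : X →ₗ[ℂ] X)) := hf
  have : FiniteDimensional ℂ (LinearMap.range (g : X →ₗ[ℂ] X)) := hg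
  refine Submodule.finiteDimensional_of_le (S₂ := LinearMap.range (f : X →ₗ[ℂ] X) ⊔
    LinearMap.range (g : X →ₗ[ℂ] X)) ?_
  rintro _ ⟨x, rfl⟩
  exact sub_mem (Submodule.mem_sup_left ⟨x, rfl⟩) (Submodule.mem_sup_right ⟨x, rfl⟩)

theorem IsFiniteRank'.mul_left {f : X →L[ℂ] X} (g : X →L[ℂ] X) (hf : IsFiniteRank' f) :
    IsFiniteRank' (g * f) := by
  have : FiniteDimensional ℂ (LinearMap.range (f : X →ₗ[ℂ] X)) := hf
  unfold IsFiniteRank'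
  rw [toLinearMap_mul, Module.End.mul_eq_comp, LinearMap.range_comp]
  exact Module.Finite.map _ _

theorem IsFiniteRank.of_isRestriction {M N : Submodule ℂ X} (hMN : IsCompl M N)
    {B : M →L[ℂ] M} {A : X →L[ℂ] X} (hAB : IsRestriction B A) (hB : IsFiniteRank' B)
    (hN : ∀ x ∈ N, A x = 0) : IsFiniteRank A := by
  have hNbot : N.map (A : X →ₗ[ℂ] X) = ⊥ :=
    eq_bot_iff.2 <| Submodule.map_le_iff_le_comap.2 fun x hx => hN x hx
  have hM : M.map (A : X →ₗ[ℂ] X) = LinearMap.range ((A : X →ₗ[ℂ] X) ∘ₗ M.subtype) := by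
    rw [LinearMap.range_comp, M.range_subtype]
  have hcomp : (A : X →ₗ[ℂ] X) ∘ₗ M.subtype = M.subtype ∘ₗ (B : M →ₗ[ℂ] M) :=
    LinearMap.ext fun x => (hAB x).symm
  have hrange : LinearMap.range (A : X →ₗ[ℂ] X) =
      (LinearMap.range (B : M →ₗ[ℂ] M)).map M.subtype := by
    rw [LinearMap.range_eq_map, ← hMN.sup_eq_top, Submodule.map_sup, hNbot, sup_bot_eq, hM,
      hcomp, LinearMap.range_comp]
  have : FiniteDimensional ℂ (LinearMap.range (B : M →ₗ[ℂ] M)) := hB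
  unfold IsFiniteRank
  rw [hrange]
  exact Module.Finite.map _ _

end FiniteRank

theorem drazin_inverse_of_bFredholm_decomposition_general
    {X : Type*} [NormedAddCommGroup X] [NormedSpace ℂ X]
    (T : X →L[ℂ] X) (M N : Submodule ℂ X)
    (hcompl : IsCompl M N)
    (hTN : ∀ x ∈ N, T x ∈ N)
    -- `T|_N` is nilpotent
    (hnil : ∃ p : ℕ, ∀ x ∈ N, (T ^ p) x = 0)
    -- `TM` is the restriction `T|_M`, and it is Fredholm
    (TM : M →L[ℂ] M) (hTMdef : ∀ x : M, (TM x : X) = T x)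
    -- `T₀` is an inverse of `T|_M` modulo the finite-rank operators on `M`
    (T₀ : M →L[ℂ] M)
    (hT₀₁ : IsFiniteRank' (TM * T₀ - 1)) (hT₀₂ : IsFiniteRank' (T₀ * TM - 1))
    -- `S = T₀ ⊕ 0`
    (S : X →L[ℂ] X) (hSM : ∀ x : M, S x = (T₀ x : X)) (hSN : ∀ x ∈ N, S x = 0) :
    -- the class of `S` is a Drazin inverse of the class of `T` modulo finite rank
    IsFiniteRank (T * S - S * T) ∧ IsFiniteRank (S * T * S - S) ∧
      ∃ k : ℕ, IsFiniteRank (T ^ (k + 1) * S - T ^ k) := by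
  obtain ⟨p, hp⟩ := hnil
  have hT : IsRestriction TM T := hTMdef
  have hS : IsRestriction T₀ S := fun x => (hSM x).symm
  refine ⟨?_, ?_, p, ?_⟩
  · refine .of_isRestriction hcompl ((hT.mul hS).sub (hS.mul hT)) ?_
      fun x hx => by simp [hSN x hx, hSN _ (hTN x hx)]
    rw [show TM * T₀ - T₀ * TM = (TM * T₀ - 1) - (T₀ * TM - 1) by abel]
    exact hT₀₁.sub hT₀₂
  · refine .of_isRestriction hcompl (((hS.mul hT).mul hS).sub hS) ?_
      fun x hx => by simp [hSN x hx]
    rw [show T₀ * TM * T₀ - T₀ = T₀ * (TM * T₀ - 1) by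
      rw [mul_sub, mul_one, mul_assoc]]
    exact hT₀₁.mul_left T₀
  · refine .of_isRestriction hcompl (((hT.pow (p + 1)).mul hS).sub (hT.pow p)) ?_
      fun x hx => by simp [hSN x hx, hp x hx]
    rw [show TM ^ (p + 1) * T₀ - TM ^ p = TM ^ p * (TM * T₀ - 1) by
      rw [pow_succ, mul_sub, mul_one, mul_assoc]]
    exact hT₀₁.mul_left (TM ^ p)

/-- If `X = M ⊕ N` with `T|_N` nilpotent and `T|_M` Fredholm with parametrix `T₀`,
then `S = T₀ ⊕ 0` is a Drazin inverse of `T` modulo finite-rank operators. -/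
theorem drazin_inverse_of_bFredholm_decomposition
    {X : Type*} [NormedAddCommGroup X] [NormedSpace ℂ X] [CompleteSpace X]
    (T : X →L[ℂ] X) (M N : Submodule ℂ X)
    (hMclosed : IsClosed (M : Set X)) (hNclosed : IsClosed (N : Set X))
    (hcompl : IsCompl M N)
    (hTM : ∀ x ∈ M, T x ∈ M) (hTN : ∀ x ∈ N, T x ∈ N)
    -- `T|_N` is nilpotent
    (hnil : ∃ p : ℕ, ∀ x ∈ N, (T ^ p) x = 0)
    -- `TM` is the restriction `T|_M`, and it is Fredholm
    (TM : M →L[ℂ] M) (hTMdef : ∀ x : M, (TM x : X) = T x)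
    (hker : FiniteDimensional ℂ (LinearMap.ker (TM : M →ₗ[ℂ] M)))
    (hclosed : IsClosed (LinearMap.range (TM : M →ₗ[ℂ] M) : Set M))
    (hcoker : FiniteDimensional ℂ (M ⧸ LinearMap.range (TM : M →ₗ[ℂ] M)))
    -- `T₀` is an inverse of `T|_M` modulo the finite-rank operators on `M`
    (T₀ : M →L[ℂ] M)
    (hT₀₁ : IsFiniteRank' (TM * T₀ - 1)) (hT₀₂ : IsFiniteRank' (T₀ * TM - 1))
    -- `S = T₀ ⊕ 0`
    (S : X →L[ℂ] X) (hSM : ∀ x : M, S x = (T₀ x : X)) (hSN : ∀ x ∈ N, S x = 0) :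
    -- the class of `S` is a Drazin inverse of the class of `T` modulo finite rank
    IsFiniteRank (T * S - S * T) ∧ IsFiniteRank (S * T * S - S) ∧
      ∃ k : ℕ, IsFiniteRank (T ^ (k + 1) * S - T ^ k) :=
  drazin_inverse_of_bFredholm_decomposition_general T M N hcompl hTN hnil TM hTMdef T₀ hT₀₁ hT₀₂ S
    hSM hSN
end

section
/- Fedosov's trace formula: if T is a Fredholm operator on a Banach space X and S ∈ L(X) satisfies TS - I and ST - I finite-rank, then TS - ST is finite-rank and tr(TS - ST) = ind(T) = dim ker T - codim ran T. -/
open LinearMap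

/-- The trace of a finite-rank bounded operator, computed as the trace of its
restriction to its (finite-dimensional) range. -/
noncomputable def trF {X : Type*} [NormedAddCommGroup X] [NormedSpace ℂ X]
    (T : X →L[ℂ] X) : ℂ :=
  LinearMap.trace ℂ (LinearMap.range (T : X →ₗ[ℂ] X))
    ((T : X →ₗ[ℂ] X).restrict (fun x _ => LinearMap.mem_range_self _ x))

/-!
Everything is linear algebra over a field. `T` has an inner inverse `s` (`T s T = T`), so
`1 - s T` is an idempotent with range `ker T` and `1 - T s` an idempotent with kernel
`range T`; their traces are `dim ker T` and `codim range T`. Writing `S = s + r`, both `T r`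
and `r T` have finite rank, hence equal trace, and
`T S - S T = (T r - r T) + ((1 - s T) - (1 - T s))`.
-/

theorem IsIdempotentElem.mul_of_mul_mul_eq_self {M : Type*} [Semigroup M] {a b : M}
    (h : a * b * a = a) : IsIdempotentElem (b * a) := by
  rw [IsIdempotentElem, mul_assoc, ← mul_assoc a, h]

theorem IsIdempotentElem.mul_of_mul_mul_eq_self' {M : Type*} [Semigroup M] {a b : M}
    (h : a * b * a = a) : IsIdempotentElem (a * b) := by
  rw [IsIdempotentElem, ← mul_assoc, h]

namespace LinearMap

variable {K V W : Type*} [Field K] [AddCommGroup V] [Module K V] [AddCommGroup W] [Module K W]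

theorem exists_comp_comp_eq_self (f : V →ₗ[K] W) : ∃ g : W →ₗ[K] V, f ∘ₗ g ∘ₗ f = f := by
  obtain ⟨π, hπ⟩ := (range f).subtype.exists_leftInverse_of_injective (Submodule.ker_subtype _)
  obtain ⟨σ, hσ⟩ := f.rangeRestrict.exists_rightInverse_of_surjective f.range_rangeRestrict
  refine ⟨σ ∘ₗ π, ?_⟩
  calc f ∘ₗ (σ ∘ₗ π) ∘ₗ f
      = (range f).subtype ∘ₗ (f.rangeRestrict ∘ₗ σ) ∘ₗ (π ∘ₗ (range f).subtype) ∘ₗ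
          f.rangeRestrict := rfl
    _ = f := by rw [hσ, hπ]; rfl

theorem range_sub_le (f g : V →ₗ[K] W) : range (f - g) ≤ range f ⊔ range g := by
  simpa only [sub_eq_add_neg, range_neg] using range_add_le f (-g)

instance finiteDimensional_range_add (f g : V →ₗ[K] W) [FiniteDimensional K (range f)]
    [FiniteDimensional K (range g)] : FiniteDimensional K (range (f + g)) :=
  Submodule.finiteDimensional_of_le (range_add_le f g)

instance finiteDimensional_range_sub (f g : V →ₗ[K] W) [FiniteDimensional K (range f)]
    [FiniteDimensional K (range g)] : FiniteDimensional K (range (f - g)) :=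
  Submodule.finiteDimensional_of_le (range_sub_le f g)

/-- The trace of `f` when `f` has finite rank (junk, namely `0`, otherwise); `trF T` is
`rangeTrace ↑T` by definition. -/
noncomputable def rangeTrace (f : Module.End K V) : K :=
  trace K (range f) (f.restrict fun x _ => mem_range_self f x)

theorem trace_restrict_comp_comm {A B : Module.End K V} {W₁ W₂ : Submodule K V}
    [FiniteDimensional K W₁] [FiniteDimensional K W₂]
    (hA : Set.MapsTo A W₂ W₁) (hB : Set.MapsTo B W₁ W₂) :
    trace K W₁ ((A ∘ₗ B).restrict (hA.comp hB)) = trace K W₂ ((B ∘ₗ A).restrict (hB.comp hA)) :=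
  trace_comp_comm' (B.restrict hB) (A.restrict hA)

theorem rangeTrace_eq_trace_restrict {f : Module.End K V} {U : Submodule K V}
    [FiniteDimensional K U] (h : range f ≤ U) :
    rangeTrace f = trace K U (f.restrict fun x _ => h (mem_range_self f x)) := by
  have : FiniteDimensional K (range f) := Submodule.finiteDimensional_of_le h
  -- `id ∘ₗ f` on `U` against `f ∘ₗ id` on `range f`
  exact (trace_restrict_comp_comm (A := id) (B := f) (W₁ := U) (W₂ := range f)
    (fun x hx => h hx) (fun x _ => mem_range_self f x)).symm

theorem rangeTrace_mul_comm (A B : Module.End K V) [FiniteDimensional K (range (A * B))]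
    [FiniteDimensional K (range (B * A))] : rangeTrace (A * B) = rangeTrace (B * A) :=
  trace_restrict_comp_comm (A := A) (B := B) (by rintro _ ⟨x, rfl⟩; exact ⟨A x, rfl⟩)
    (by rintro _ ⟨x, rfl⟩; exact ⟨B x, rfl⟩)

theorem rangeTrace_add (f g : Module.End K V) [FiniteDimensional K (range f)]
    [FiniteDimensional K (range g)] : rangeTrace (f + g) = rangeTrace f + rangeTrace g := by
  rw [rangeTrace_eq_trace_restrict (range_add_le f g),
    rangeTrace_eq_trace_restrict (le_sup_left : range f ≤ range f ⊔ range g),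
    rangeTrace_eq_trace_restrict (le_sup_right : range g ≤ range f ⊔ range g), ← map_add]
  rfl

theorem rangeTrace_sub (f g : Module.End K V) [FiniteDimensional K (range f)]
    [FiniteDimensional K (range g)] : rangeTrace (f - g) = rangeTrace f - rangeTrace g := by
  rw [rangeTrace_eq_trace_restrict (range_sub_le f g),
    rangeTrace_eq_trace_restrict (le_sup_left : range f ≤ range f ⊔ range g),
    rangeTrace_eq_trace_restrict (le_sup_right : range g ≤ range f ⊔ range g), ← map_sub]
  rfl

theorem rangeTrace_of_isIdempotentElem {p : Module.End K V} (hp : IsIdempotentElem p)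
    [FiniteDimensional K (range p)] : rangeTrace p = Module.finrank K (range p) := by
  have : (p.restrict fun x _ => mem_range_self p x) = LinearMap.id :=
    LinearMap.ext fun ⟨_, y, hy⟩ => Subtype.ext (hy ▸ LinearMap.congr_fun hp.eq y)
  rw [rangeTrace, this, trace_id]

section InnerInverse

variable {T s : Module.End K V}

theorem range_one_sub_mul_eq_ker (h : T * s * T = T) : range (1 - s * T) = ker T := by
  rw [(IsIdempotentElem.mul_of_mul_mul_eq_self h).one_sub.range_eq_ker_one_sub, sub_sub_cancel]
  refine le_antisymm (fun x hx => ?_) (ker_le_ker_comp T s)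
  rw [mem_ker, ← h, mul_assoc, Module.End.mul_apply, hx, map_zero]

theorem ker_one_sub_mul_eq_range (h : T * s * T = T) : ker (1 - T * s) = range T := by
  rw [← (IsIdempotentElem.mul_of_mul_mul_eq_self' h).range_eq_ker_one_sub]
  refine le_antisymm (range_comp_le_range s T) ?_
  rintro _ ⟨x, rfl⟩
  exact ⟨T x, LinearMap.congr_fun h x⟩

noncomputable def quotientRangeEquivRangeOneSubMul (h : T * s * T = T) :
    (V ⧸ range T) ≃ₗ[K] range (1 - T * s) :=
  Submodule.quotEquivOfEq _ _ (ker_one_sub_mul_eq_range h).symm ≪≫ₗ quotKerEquivRange _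

end InnerInverse

theorem commutator_eq_sub (T S : Module.End K V) : T * S - S * T = (T * S - 1) - (S * T - 1) := by
  abel

theorem rangeTrace_commutator_eq_index (T S : Module.End K V) [FiniteDimensional K (ker T)]
    [FiniteDimensional K (V ⧸ range T)] [FiniteDimensional K (range (T * S - 1))]
    [FiniteDimensional K (range (S * T - 1))] :
    rangeTrace (T * S - S * T) =
      (Module.finrank K (ker T) : K) - Module.finrank K (V ⧸ range T) := by
  obtain ⟨s, hs⟩ := T.exists_comp_comp_eq_self
  have h : T * s * T = T := hs
  have hp := (IsIdempotentElem.mul_of_mul_mul_eq_self h).one_sub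
  have hq := (IsIdempotentElem.mul_of_mul_mul_eq_self' h).one_sub
  have : FiniteDimensional K (range (1 - s * T)) := range_one_sub_mul_eq_ker h ▸ inferInstance
  have : FiniteDimensional K (range (1 - T * s)) :=
    (quotientRangeEquivRangeOneSubMul h).finiteDimensional
  set r := S - s
  have hTr : T * r = (T * S - 1) + (1 - T * s) := by simp only [r, mul_sub]; abel
  have hrT : r * T = (S * T - 1) + (1 - s * T) := by simp only [r, sub_mul]; abel
  have : FiniteDimensional K (range (T * r)) := hTr ▸ inferInstance
  have : FiniteDimensional K (range (r * T)) := hrT ▸ inferInstance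
  have hcomm : T * S - S * T = (T * r - r * T) + ((1 - s * T) - (1 - T * s)) := by
    simp only [r, mul_sub, sub_mul]; abel
  rw [hcomm, rangeTrace_add, rangeTrace_sub, rangeTrace_sub, rangeTrace_mul_comm, sub_self,
    zero_add, rangeTrace_of_isIdempotentElem hp, rangeTrace_of_isIdempotentElem hq,
    (LinearEquiv.ofEq _ _ (range_one_sub_mul_eq_ker h)).finrank_eq,
    (quotientRangeEquivRangeOneSubMul h).finrank_eq]

end LinearMap

theorem fedosov_trace_formula_general
    {X : Type*} [NormedAddCommGroup X] [NormedSpace ℂ X]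
    (T S : X →L[ℂ] X)
    (hker : FiniteDimensional ℂ (LinearMap.ker (T : X →ₗ[ℂ] X)))
    (hcoker : FiniteDimensional ℂ (X ⧸ LinearMap.range (T : X →ₗ[ℂ] X)))
    (hTS : IsFiniteRank (T * S - 1)) (hST : IsFiniteRank (S * T - 1)) :
    IsFiniteRank (T * S - S * T) ∧
      trF (T * S - S * T) =
        ((Module.finrank ℂ (LinearMap.ker (T : X →ₗ[ℂ] X)) : ℤ) -
          (Module.finrank ℂ (X ⧸ LinearMap.range (T : X →ₗ[ℂ] X)) : ℤ) : ℤ) := by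
  let A : Module.End ℂ X := T
  let B : Module.End ℂ X := S
  have : FiniteDimensional ℂ (range (A * B - 1)) := hTS
  have : FiniteDimensional ℂ (range (B * A - 1)) := hST
  refine ⟨show FiniteDimensional ℂ (range (A * B - B * A)) from
    commutator_eq_sub A B ▸ inferInstance, ?_⟩
  push_cast
  exact rangeTrace_commutator_eq_index A B

/-- Fedosov's trace formula. -/
theorem fedosov_trace_formula
    {X : Type*} [NormedAddCommGroup X] [NormedSpace ℂ X] [CompleteSpace X]
    (T S : X →L[ℂ] X)
    (hker : FiniteDimensional ℂ (LinearMap.ker (T : X →ₗ[ℂ] X)))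
    (hclosed : IsClosed (LinearMap.range (T : X →ₗ[ℂ] X) : Set X))
    (hcoker : FiniteDimensional ℂ (X ⧸ LinearMap.range (T : X →ₗ[ℂ] X)))
    (hTS : IsFiniteRank (T * S - 1)) (hST : IsFiniteRank (S * T - 1)) :
    IsFiniteRank (T * S - S * T) ∧
      trF (T * S - S * T) =
        ((Module.finrank ℂ (LinearMap.ker (T : X →ₗ[ℂ] X)) : ℤ) -
          (Module.finrank ℂ (X ⧸ LinearMap.range (T : X →ₗ[ℂ] X)) : ℤ) : ℤ) :=
  fedosov_trace_formula_general T S hker hcoker hTS hST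
end

section
/- Let A be a Banach algebra, J an ideal of A, and suppose that an element is invertible modulo J if and only if it is invertible modulo the closure of J. If a ∈ A is B-Fredholm modulo J (π(a) Drazin invertible in A/J), then there exists ε > 0 such that for all λ ∈ ℂ with 0 < |λ| < ε, the element a - λ·1 is invertible modulo J (i.e., Fredholm modulo J). -/
namespace IsDrazinInverse

variable {R : Type*} [Ring R] {b c : R}

theorem isNilpotent_mul_one_sub_mul (h : IsDrazinInverse b c) :
    IsNilpotent (b * (1 - b * c)) := by
  obtain ⟨k, hk⟩ := h.2.2
  have hkill : b ^ k * (1 - b * c) = 0 := by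
    rw [mul_sub, mul_one, ← mul_assoc, ← pow_succ, hk, sub_self]
  have hcomm : Commute b (1 - b * c) :=
    (Commute.one_right b).sub_right ((Commute.refl b).mul_right h.1)
  refine ⟨k + 1, ?_⟩
  rw [hcomm.mul_pow, pow_succ', pow_succ', mul_assoc, ← mul_assoc (b ^ k), hkill, zero_mul,
    mul_zero]

theorem isUnit_sub (h : IsDrazinInverse b c) {z : R} (hz : IsUnit z) (hzb : Commute z b)
    (hzc : Commute z c) (hunit : IsUnit (1 - z * c)) : IsUnit (b - z) := by
  obtain ⟨u, rfl⟩ := hz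
  set p := 1 - b * c
  have hbc : Commute b c := h.1
  have hbp : Commute b p := (Commute.one_right b).sub_right ((Commute.refl b).mul_right hbc)
  have hcp : Commute c p := (Commute.one_right c).sub_right (hbc.symm.mul_right (Commute.refl c))
  have hup : Commute (u : R) p := (Commute.one_right _).sub_right (hzb.mul_right hzc)
  have huv : Commute (u : R) ↑u⁻¹ := (Commute.refl _).units_inv_right
  have hvb : Commute (↑u⁻¹ : R) b := hzb.units_inv_left
  have hvc : Commute (↑u⁻¹ : R) c := hzc.units_inv_left
  have hvp : Commute (↑u⁻¹ : R) p := hup.units_inv_left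
  have hprod : (b - u) * (c - ↑u⁻¹ * p) = (1 - u * c) + -(↑u⁻¹ * (b * p)) := by
    have hinv : (b - u) * ↑u⁻¹ = ↑u⁻¹ * b - 1 := by rw [sub_mul, hvb.eq, u.mul_inv]
    rw [mul_sub (b - u), ← mul_assoc, hinv]
    simp only [p]
    noncomm_ring
  have hnil : IsNilpotent (-(↑u⁻¹ * (b * p))) :=
    ((hvb.mul_right hvp).isNilpotent_mul_left h.isNilpotent_mul_one_sub_mul).neg
  have hnil_comm : Commute (-(↑u⁻¹ * (b * p))) (1 - u * c) :=
    ((Commute.one_right _).sub_right ((huv.symm.mul_right hvc).mul_left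
      ((hzb.symm.mul_right hbc).mul_left (hup.symm.mul_right hcp.symm)))).neg_left
  have hfactor_comm : Commute (b - u) (c - ↑u⁻¹ * p) :=
    (hbc.sub_left hzc).sub_right ((hvb.symm.mul_right hbp).sub_left (huv.mul_right hup))
  exact (hfactor_comm.isUnit_mul_iff.mp
    (hprod ▸ hnil.isUnit_add_left_of_commute hunit hnil_comm)).1

end IsDrazinInverse

theorem TwoSidedIdeal.isUnit_mk'_iff {R : Type*} [Ring R] (J : TwoSidedIdeal R) (x : R) :
    IsUnit (J.ringCon.mk' x) ↔ ∃ y, x * y - 1 ∈ J ∧ y * x - 1 ∈ J := by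
  simp only [← TwoSidedIdeal.rel_iff, ← RingCon.eq, isUnit_iff_exists, RingCon.coe_mk']
  constructor
  · rintro ⟨v, hxv, hvx⟩
    obtain ⟨y, rfl⟩ := J.ringCon.mk'_surjective v
    exact ⟨y, hxv, hvx⟩
  · rintro ⟨y, hxy, hyx⟩
    exact ⟨y, hxy, hyx⟩

theorem eventually_isUnit_one_sub_smul {𝕜 R : Type*} [NormedField 𝕜] [NormedRing R]
    [NormedAlgebra 𝕜 R] [HasSummableGeomSeries R] (x : R) :
    ∀ᶠ t in nhds (0 : 𝕜), IsUnit (1 - t • x) := by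
  have hcont : Continuous fun t : 𝕜 => 1 - t • x := by fun_prop
  exact hcont.continuousAt.eventually (Units.isOpen.mem_nhds (by simp))

theorem bFredholm_perturbation_general
    {A : Type*} [NormedRing A] [NormedAlgebra ℂ A] [CompleteSpace A]
    (J : TwoSidedIdeal A)
    (π : A →+* J.ringCon.Quotient) (hπ : π = RingCon.mk' J.ringCon)
    (a : A) (hBF : ∃ a₀ : A, IsDrazinInverse (π a) (π a₀)) :
    ∃ ε > 0, ∀ lam : ℂ, lam ≠ 0 → ‖lam‖ < ε →
      ∃ b, (a - lam • 1) * b - 1 ∈ J ∧ b * (a - lam • 1) - 1 ∈ J := by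
  obtain ⟨a₀, hD⟩ := hBF
  obtain ⟨ε, hε, hsmall⟩ :=
    Metric.eventually_nhds_iff.mp (eventually_isUnit_one_sub_smul (𝕜 := ℂ) a₀)
  refine ⟨ε, hε, fun lam hlam hlt => ?_⟩
  subst hπ
  rw [← J.isUnit_mk'_iff, Algebra.smul_def, mul_one, map_sub]
  refine hD.isUnit_sub ((hlam.isUnit.map _).map _) ((Algebra.commute_algebraMap_left _ _).map _)
    ((Algebra.commute_algebraMap_left _ _).map _) ?_
  rw [← map_mul, ← map_one (RingCon.mk' _), ← map_sub, ← Algebra.smul_def]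
  exact (hsmall (by simpa using hlt)).map _

/-- In a Banach algebra in which invertibility modulo the ideal `J` coincides with
invertibility modulo the closure of `J`, a B-Fredholm element `a` modulo `J` is such
that `a - λ·1` is Fredholm (invertible) modulo `J` for all small nonzero `λ`. -/
theorem bFredholm_perturbation
    {A : Type*} [NormedRing A] [NormedAlgebra ℂ A] [CompleteSpace A]
    (J : TwoSidedIdeal A)
    (hJ : ∀ x : A, (∃ b, x * b - 1 ∈ J ∧ b * x - 1 ∈ J) ↔
      (∃ b, x * b - 1 ∈ closure (J : Set A) ∧ b * x - 1 ∈ closure (J : Set A)))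
    (π : A →+* J.ringCon.Quotient) (hπ : π = RingCon.mk' J.ringCon)
    (a : A) (hBF : ∃ a₀ : A, IsDrazinInverse (π a) (π a₀)) :
    ∃ ε > 0, ∀ lam : ℂ, lam ≠ 0 → ‖lam‖ < ε →
      ∃ b, (a - lam • 1) * b - 1 ∈ J ∧ b * (a - lam • 1) - 1 ∈ J :=
  bFredholm_perturbation_general J π hπ a hBF
end

section
/- In a unital Banach algebra B, if b is Drazin invertible (there exist c and k with bc = cb, cbc = c, b^(k+1)c = b^k), then 0 is not an accumulation point of the spectrum of b; i.e., there is ε > 0 such that b - λ·1 is invertible for all 0 < |λ| < ε. -/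
/-!
With `q = 1 - b c`, the element `b q` is nilpotent, and for `λ ≠ 0`
`(b - λ) (c - λ⁻¹ q) = (1 - λ c) - λ⁻¹ b q`.
For `‖λ‖ < ‖c‖⁻¹` the first summand is a unit by the Neumann series, and adding the commuting
nilpotent `-λ⁻¹ b q` keeps it a unit. Since `b - λ` commutes with `c - λ⁻¹ q`, it is a unit too.
-/

namespace IsDrazinInverse

variable {R : Type*} [Ring R] {b c : R}

theorem isIdempotentElem_one_sub_mul (h : IsDrazinInverse b c) :
    IsIdempotentElem (1 - b * c) := by
  refine IsIdempotentElem.one_sub ?_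
  rw [IsIdempotentElem, mul_assoc, ← mul_assoc c, h.2.1]

theorem isUnit_sub_smul_one {𝕜 : Type*} [Field 𝕜] [Algebra 𝕜 R] (h : IsDrazinInverse b c)
    {lam : 𝕜} (hlam : lam ≠ 0) (hu : IsUnit (1 - lam • c)) : IsUnit (b - lam • 1) := by
  set q := 1 - b * c
  have hbc : Commute b c := h.commute
  have hcq : Commute c q :=
    (Commute.one_right c).sub_right (hbc.symm.mul_right (Commute.refl c))
  have hbq : Commute b q := (Commute.one_right b).sub_right ((Commute.refl b).mul_right hbc)
  have hfactor : (b - lam • 1) * (c - lam⁻¹ • q) = (1 - lam • c) + -(lam⁻¹ • (b * q)) := by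
    have hpq : b * c + q = 1 := add_sub_cancel (b * c) 1
    rw [sub_mul, smul_one_mul, mul_sub, mul_smul_comm, smul_sub, smul_smul,
      mul_inv_cancel₀ hlam, one_smul, ← hpq]
    abel
  have hunit : IsUnit ((b - lam • 1) * (c - lam⁻¹ • q)) := by
    rw [hfactor]
    refine (h.isNilpotent_mul_one_sub_mul.smul lam⁻¹).neg.isUnit_add_left_of_commute hu ?_
    exact (((Commute.one_right _).sub_right ((hbc.mul_left hcq.symm).smul_right lam)).smul_left
      lam⁻¹).neg_left
  have hcomm : Commute (b - lam • 1) (c - lam⁻¹ • q) :=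
    (hbc.sub_right (hbq.smul_right _)).sub_left ((Commute.one_left _).smul_left lam)
  exact (hcomm.isUnit_mul_iff.mp hunit).1

end IsDrazinInverse

/-- In a unital Banach algebra, if `b` is Drazin invertible then `0` is not an
accumulation point of the spectrum of `b`: `b - λ·1` is invertible for all
sufficiently small nonzero `λ`. -/
theorem drazin_invertible_isolated_zero
    {B : Type*} [NormedRing B] [NormedAlgebra ℂ B] [CompleteSpace B]
    (b : B) (h : ∃ c : B, IsDrazinInverse b c) :
    ∃ ε > 0, ∀ lam : ℂ, lam ≠ 0 → ‖lam‖ < ε → IsUnit (b - lam • 1) := by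
  obtain ⟨c, hc⟩ := h
  refine ⟨(‖c‖ + 1)⁻¹, by positivity, fun lam hlam hnorm => ?_⟩
  have hsmall : ‖lam • c‖ < 1 := by
    calc ‖lam • c‖ ≤ ‖lam‖ * ‖c‖ := norm_smul_le lam c
      _ ≤ ‖lam‖ * (‖c‖ + 1) := by gcongr; linarith
      _ < (‖c‖ + 1)⁻¹ * (‖c‖ + 1) := by gcongr
      _ = 1 := inv_mul_cancel₀ (by positivity)
  exact hc.isUnit_sub_smul_one hlam (isUnit_one_sub_of_norm_lt_one hsmall)
end

section
/- Let T be a Fredholm operator on a Banach space X, S a parametrix (TS - I, ST - I finite-rank), and λ ∈ ℂ nonzero with |λ| < ε for suitable ε (smaller than the reciprocal of the norm of S and such that T - λI remains Fredholm). Then tr((T-λI)S' - S'(T-λI)) = tr(TS - ST) for any parametrix S' of T - λI; equivalently, the trace-index of T - λI equals the trace-index of T for small nonzero λ. -/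
/-!
Write `T' = T - λ`. For `‖λ S‖ < 1` the Neumann series inverts `1 - λ S`; its inverse `R` commutes
with `S`, and `S R` is a parametrix of `T'`, since `T' S R - 1 = (T S - 1) R` and
`S R T' - 1 = R (S T - 1)`. Cyclicity of the trace turns `tr [T', S R]` into `tr ((T S - S T) R)`,
and expanding `R = 1 + λ S R` leaves `tr [T, S] + λ tr ((T S - S T) S R)`, whose last term vanishes,
again by cyclicity, because `T S - 1` has finite rank. Any other parametrix of `T'` differs from
`S R` by a finite-rank operator `D`, and `tr [T', D] = 0`.
-/

section Algebra

variable {𝕜 A : Type*} [CommRing 𝕜] [Ring A] [Algebra 𝕜 A] {T S : A} {c : 𝕜} {u : Aˣ}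

theorem commute_inv_one_sub_smul (hu : (u : A) = 1 - c • S) : Commute S ↑u⁻¹ :=
  Commute.units_inv_right <| hu ▸ (Commute.one_right S).sub_right ((Commute.refl S).smul_right c)

theorem inv_one_sub_smul_eq (hu : (u : A) = 1 - c • S) : (↑u⁻¹ : A) = 1 + c • (S * ↑u⁻¹) := by
  have h := u.mul_inv
  rw [hu, sub_mul, one_mul, smul_mul_assoc] at h
  exact sub_eq_iff_eq_add.mp h

theorem sub_smul_one_mul_mul_inv_sub_one (hu : (u : A) = 1 - c • S) :
    (T - c • 1) * (S * ↑u⁻¹) - 1 = (T * S - 1) * ↑u⁻¹ := by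
  have h : (T - c • 1) * (S * ↑u⁻¹) - 1 = (T * S - 1) * ↑u⁻¹ + ((1 - c • S) * ↑u⁻¹ - 1) := by
    simp only [sub_mul, smul_mul_assoc, one_mul, mul_assoc]
    abel
  rw [h, ← hu, u.mul_inv, sub_self, add_zero]

theorem mul_inv_mul_sub_smul_one_sub_one (hu : (u : A) = 1 - c • S) :
    S * ↑u⁻¹ * (T - c • 1) - 1 = ↑u⁻¹ * (S * T - 1) := by
  have h : S * ↑u⁻¹ * (T - c • 1) - 1 = ↑u⁻¹ * (S * T - 1) + (↑u⁻¹ * (1 - c • S) - 1) := by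
    rw [(commute_inv_one_sub_smul hu).eq]
    simp only [mul_sub, mul_smul_comm, mul_one, mul_assoc]
    abel
  rw [h, ← hu, u.inv_mul, sub_self, add_zero]

end Algebra

section Operator

variable {X : Type*} [NormedAddCommGroup X] [NormedSpace ℂ X] {F G T S S₁ S₂ : X →L[ℂ] X}

namespace IsFiniteRank

theorem of_range_le (hF : IsFiniteRank F)
    (h : LinearMap.range (G : X →ₗ[ℂ] X) ≤ LinearMap.range (F : X →ₗ[ℂ] X)) :
    IsFiniteRank G :=
  have : FiniteDimensional ℂ (LinearMap.range (F : X →ₗ[ℂ] X)) := hF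
  Submodule.finiteDimensional_of_le h

theorem mul_left (A : X →L[ℂ] X) (hF : IsFiniteRank F) : IsFiniteRank (A * F) := by
  have : FiniteDimensional ℂ (LinearMap.range (F : X →ₗ[ℂ] X)) := hF
  change FiniteDimensional ℂ (LinearMap.range ((A : X →ₗ[ℂ] X) ∘ₗ (F : X →ₗ[ℂ] X)))
  rw [LinearMap.range_comp]
  infer_instance

theorem mul_right (hF : IsFiniteRank F) (A : X →L[ℂ] X) : IsFiniteRank (F * A) :=
  hF.of_range_le (LinearMap.range_comp_le_range _ _)

theorem add (hF : IsFiniteRank F) (hG : IsFiniteRank G) : IsFiniteRank (F + G) :=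
  have : FiniteDimensional ℂ (LinearMap.range (F : X →ₗ[ℂ] X)) := hF
  have : FiniteDimensional ℂ (LinearMap.range (G : X →ₗ[ℂ] X)) := hG
  Submodule.finiteDimensional_of_le (LinearMap.range_add_le _ _)

theorem smul (c : ℂ) (hF : IsFiniteRank F) : IsFiniteRank (c • F) :=
  hF.of_range_le (LinearMap.range_smul_le_range _ c)

theorem sub (hF : IsFiniteRank F) (hG : IsFiniteRank G) : IsFiniteRank (F - G) := by
  simpa [sub_eq_add_neg] using hF.add (hG.smul (-1))

end IsFiniteRank

theorem trF_eq_trace_restrict (F : X →L[ℂ] X) (p : Submodule ℂ X) [FiniteDimensional ℂ p]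
    (h : LinearMap.range (F : X →ₗ[ℂ] X) ≤ p) :
    trF F = LinearMap.trace ℂ p ((F : X →ₗ[ℂ] X).restrict
      fun x _ => h (LinearMap.mem_range_self _ x)) := by
  set q := LinearMap.range (F : X →ₗ[ℂ] X)
  have : FiniteDimensional ℂ q := Submodule.finiteDimensional_of_le h
  let F' : p →ₗ[ℂ] q := ((F : X →ₗ[ℂ] X).domRestrict p).codRestrict q
    fun x => LinearMap.mem_range_self _ _
  have hp : (F : X →ₗ[ℂ] X).restrict (fun x _ => h (LinearMap.mem_range_self _ x)) =
      Submodule.inclusion h ∘ₗ F' := rfl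
  have hq : (F : X →ₗ[ℂ] X).restrict (fun x (_ : x ∈ q) => LinearMap.mem_range_self _ x) =
      F' ∘ₗ Submodule.inclusion h := rfl
  rw [trF, hq, hp, LinearMap.trace_comp_comm']

theorem trF_add (hF : IsFiniteRank F) (hG : IsFiniteRank G) : trF (F + G) = trF F + trF G := by
  have : FiniteDimensional ℂ (LinearMap.range (F : X →ₗ[ℂ] X)) := hF
  have : FiniteDimensional ℂ (LinearMap.range (G : X →ₗ[ℂ] X)) := hG
  let p := LinearMap.range (F : X →ₗ[ℂ] X) ⊔ LinearMap.range (G : X →ₗ[ℂ] X)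
  rw [trF_eq_trace_restrict F p le_sup_left, trF_eq_trace_restrict G p le_sup_right,
    trF_eq_trace_restrict (F + G) p (LinearMap.range_add_le _ _), ← map_add]
  rfl

theorem trF_smul (c : ℂ) (hF : IsFiniteRank F) : trF (c • F) = c * trF F := by
  have : FiniteDimensional ℂ (LinearMap.range (F : X →ₗ[ℂ] X)) := hF
  rw [trF_eq_trace_restrict (c • F) _ (LinearMap.range_smul_le_range _ c), trF, ← smul_eq_mul,
    ← map_smul]
  rfl

theorem trF_sub (hF : IsFiniteRank F) (hG : IsFiniteRank G) : trF (F - G) = trF F - trF G := by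
  rw [sub_eq_add_neg, ← neg_one_smul ℂ G, trF_add hF (hG.smul _), trF_smul _ hG]
  ring

theorem trF_mul_comm (A : X →L[ℂ] X) (hF : IsFiniteRank F) : trF (A * F) = trF (F * A) := by
  set q := LinearMap.range (F : X →ₗ[ℂ] X)
  have : FiniteDimensional ℂ q := hF
  set q' := q.map (A : X →ₗ[ℂ] X)
  let A' : q →ₗ[ℂ] q' := ((A : X →ₗ[ℂ] X).domRestrict q).codRestrict q'
    fun x => Submodule.mem_map_of_mem x.2
  let F' : q' →ₗ[ℂ] q := ((F : X →ₗ[ℂ] X).domRestrict q').codRestrict q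
    fun x => LinearMap.mem_range_self _ _
  have hAF : LinearMap.range ((A * F : X →L[ℂ] X) : X →ₗ[ℂ] X) ≤ q' :=
    (LinearMap.range_comp _ _).le
  rw [trF_eq_trace_restrict (A * F) q' hAF,
    trF_eq_trace_restrict (F * A) q (LinearMap.range_comp_le_range _ _)]
  exact LinearMap.trace_comp_comm' F' A'

theorem trF_commutator_eq_zero (A : X →L[ℂ] X) (hF : IsFiniteRank F) :
    trF (A * F - F * A) = 0 := by
  rw [trF_sub (hF.mul_left A) (hF.mul_right A), trF_mul_comm A hF, sub_self]

theorem trF_commutator_mul_mul_eq_zero {R : X →L[ℂ] X} (hK : IsFiniteRank (T * S - 1))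
    (hSR : Commute S R) : trF ((T * S - S * T) * (S * R)) = 0 := by
  have hsplit : (T * S - S * T) * (S * R) = (T * S - 1) * (S * R) - S * ((T * S - 1) * R) := by
    noncomm_ring
  have hcycle : trF (S * ((T * S - 1) * R)) = trF ((T * S - 1) * (S * R)) := by
    rw [trF_mul_comm S (hK.mul_right R), mul_assoc, ← hSR.eq]
  rw [hsplit, trF_sub (hK.mul_right _) ((hK.mul_right R).mul_left S), hcycle, sub_self]

def IsParametrix (T S : X →L[ℂ] X) : Prop :=
  IsFiniteRank (T * S - 1) ∧ IsFiniteRank (S * T - 1)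

namespace IsParametrix

theorem isFiniteRank_commutator (h : IsParametrix T S) : IsFiniteRank (T * S - S * T) := by
  simpa using h.1.sub h.2

theorem isFiniteRank_sub (h₁ : IsParametrix T S₁) (h₂ : IsParametrix T S₂) :
    IsFiniteRank (S₁ - S₂) := by
  have hD : S₁ - S₂ = (S₁ * T - 1) * S₂ - S₁ * (T * S₂ - 1) := by noncomm_ring
  rw [hD]
  exact (h₁.2.mul_right S₂).sub (h₂.1.mul_left S₁)

theorem trF_commutator_eq (h₁ : IsParametrix T S₁) (h₂ : IsParametrix T S₂) :
    trF (T * S₁ - S₁ * T) = trF (T * S₂ - S₂ * T) := by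
  have hD := h₁.isFiniteRank_sub h₂
  have hsplit : T * S₁ - S₁ * T = (T * S₂ - S₂ * T) + (T * (S₁ - S₂) - (S₁ - S₂) * T) := by
    noncomm_ring
  rw [hsplit, trF_add h₂.isFiniteRank_commutator ((hD.mul_left T).sub (hD.mul_right T)),
    trF_commutator_eq_zero T hD, add_zero]

variable {lam : ℂ} {u : (X →L[ℂ] X)ˣ}

theorem sub_smul_one (h : IsParametrix T S) (hu : (u : X →L[ℂ] X) = 1 - lam • S) :
    IsParametrix (T - lam • 1) (S * (↑u⁻¹ : X →L[ℂ] X)) := by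
  constructor
  · rw [sub_smul_one_mul_mul_inv_sub_one hu]
    exact h.1.mul_right _
  · rw [mul_inv_mul_sub_smul_one_sub_one hu]
    exact h.2.mul_left _

theorem trF_commutator_sub_smul_one (h : IsParametrix T S)
    (hu : (u : X →L[ℂ] X) = 1 - lam • S) :
    trF ((T - lam • 1) * (S * (↑u⁻¹ : X →L[ℂ] X)) - S * (↑u⁻¹ : X →L[ℂ] X) * (T - lam • 1)) =
      trF (T * S - S * T) := by
  set R : X →L[ℂ] X := ↑u⁻¹
  have hC := h.isFiniteRank_commutator
  have hR : (T * S - S * T) * R = (T * S - S * T) + lam • ((T * S - S * T) * (S * R)) := by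
    conv_lhs => rw [show R = 1 + lam • (S * R) from inv_one_sub_smul_eq hu]
    rw [mul_add, mul_one, mul_smul_comm]
  calc trF ((T - lam • 1) * (S * R) - S * R * (T - lam • 1))
      = trF ((T * S - 1) * R - R * (S * T - 1)) := by
        rw [← sub_smul_one_mul_mul_inv_sub_one hu, ← mul_inv_mul_sub_smul_one_sub_one hu,
          sub_sub_sub_cancel_right]
    _ = trF ((T * S - 1) * R) - trF ((S * T - 1) * R) := by
        rw [trF_sub (h.1.mul_right R) (h.2.mul_left R), trF_mul_comm R h.2]
    _ = trF ((T * S - S * T) * R) := by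
        rw [← trF_sub (h.1.mul_right R) (h.2.mul_right R), ← sub_mul, sub_sub_sub_cancel_right]
    _ = trF (T * S - S * T) := by
        rw [hR, trF_add hC ((hC.mul_right _).smul lam), trF_smul lam (hC.mul_right _),
          trF_commutator_mul_mul_eq_zero h.1 (commute_inv_one_sub_smul hu), mul_zero, add_zero]

end IsParametrix

end Operator

theorem trace_index_locally_constant_general
    {X : Type*} [NormedAddCommGroup X] [NormedSpace ℂ X] [CompleteSpace X]
    (T S : X →L[ℂ] X)
    (hTS : IsFiniteRank (T * S - 1)) (hST : IsFiniteRank (S * T - 1)) :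
    ∃ ε > 0, ∀ lam : ℂ, lam ≠ 0 → ‖lam‖ < ε →
      ∀ S' : X →L[ℂ] X,
        IsFiniteRank ((T - lam • 1) * S' - 1) → IsFiniteRank (S' * (T - lam • 1) - 1) →
        trF ((T - lam • 1) * S' - S' * (T - lam • 1)) = trF (T * S - S * T) := by
  refine ⟨(‖S‖ + 1)⁻¹, by positivity, fun lam _ hlam S' hS'₁ hS'₂ => ?_⟩
  have hsmall : ‖lam • S‖ < 1 := by
    rw [← one_div, lt_div_iff₀ (by positivity)] at hlam
    rw [norm_smul]
    nlinarith [norm_nonneg lam]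
  have hS : IsParametrix T S := ⟨hTS, hST⟩
  rw [IsParametrix.trF_commutator_eq ⟨hS'₁, hS'₂⟩ (hS.sub_smul_one (Units.val_oneSub _ hsmall))]
  exact hS.trF_commutator_sub_smul_one (Units.val_oneSub _ hsmall)

/-- For a Fredholm operator `T` with parametrix `S`, the trace-index of `T - λI`
equals the trace-index of `T` for all sufficiently small nonzero `λ`. -/
theorem trace_index_locally_constant
    {X : Type*} [NormedAddCommGroup X] [NormedSpace ℂ X] [CompleteSpace X]
    (T S : X →L[ℂ] X)
    (hker : FiniteDimensional ℂ (LinearMap.ker (T : X →ₗ[ℂ] X)))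
    (hclosed : IsClosed (LinearMap.range (T : X →ₗ[ℂ] X) : Set X))
    (hcoker : FiniteDimensional ℂ (X ⧸ LinearMap.range (T : X →ₗ[ℂ] X)))
    (hTS : IsFiniteRank (T * S - 1)) (hST : IsFiniteRank (S * T - 1)) :
    ∃ ε > 0, ∀ lam : ℂ, lam ≠ 0 → ‖lam‖ < ε →
      ∀ S' : X →L[ℂ] X,
        IsFiniteRank ((T - lam • 1) * S' - 1) → IsFiniteRank (S' * (T - lam • 1) - 1) →
        trF ((T - lam • 1) * S' - S' * (T - lam • 1)) = trF (T * S - S * T) :=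
  trace_index_locally_constant_general T S hTS hST
end
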